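/- Let μ > 0 and M ∈ ℝ, and let A_M be the diffusion wave and φ₀(ξ) = (4πμ)^{−1/2} e^{−ξ²/(4μ)}. Then for all ξ ∈ ℝ, exp(−(1/(2μ)) ∫_{−∞}^ξ A_M(y) dy) = 1 − (1 − e^{−M/(2μ)}) ∫_{−∞}^ξ φ₀(y) dy, and this quantity is bounded below by min{1, e^{−M/(2μ)}} > 0. -/

import Mathlib

open MeasureTheory

/-- The diffusion wave `A_M` with viscosity `μ` and mass `M`:
`A_M(ξ) = α₀ e^{−ξ²/(4μ)} / (1 − (α₀/(2μ)) ∫_{−∞}^ξ e^{−η²/(4μ)} dη)` with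
`α₀ = √(μ/π)(1 − e^{−M/(2μ)})`. -/
noncomputable def AM (μ M ξ : ℝ) : ℝ :=
  Real.sqrt (μ / Real.pi) * (1 - Real.exp (-M / (2 * μ))) * Real.exp (-ξ ^ 2 / (4 * μ)) /
    (1 - Real.sqrt (μ / Real.pi) * (1 - Real.exp (-M / (2 * μ))) / (2 * μ) *
      ∫ η in Set.Iio ξ, Real.exp (-η ^ 2 / (4 * μ)))

/-- The Gaussian `φ₀(ξ) = (4πμ)^{−1/2} e^{−ξ²/(4μ)}`. -/
noncomputable def phi0 (μ ξ : ℝ) : ℝ :=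
  (Real.sqrt (4 * Real.pi * μ))⁻¹ * Real.exp (-ξ ^ 2 / (4 * μ))

/-!
Write `G(ξ) = ∫_{−∞}^ξ φ₀` and `c = 1 − e^{−M/(2μ)}`. Since `√(μ/π) = 2μ/√(4πμ)`, the diffusion
wave is `A_M = 2μ c φ₀ / (1 − c G) = −2μ (log (1 − c G))'`, and `G → 0` at `−∞`, so
`∫_{−∞}^ξ A_M = −2μ log (1 − c G(ξ))`; exponentiating gives the identity. As `0 ≤ G ≤ 1` and
`1 − c t` is affine in `t`, `1 − c G` lies above its smaller endpoint value
`min {1, 1 − c} = min {1, e^{−M/(2μ)}}`, which also keeps the logarithm well defined.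
-/

open Set Filter Topology ProbabilityTheory

lemma min_one_one_sub_le_one_sub_mul {c t : ℝ} (ht₀ : 0 ≤ t) (ht₁ : t ≤ 1) :
    min 1 (1 - c) ≤ 1 - c * t := by
  rcases le_total c 0 with hc | hc
  · exact (min_le_left _ _).trans (by nlinarith)
  · exact (min_le_right _ _).trans (by nlinarith)

section PrimitiveFromMinusInfinity

variable {f : ℝ → ℝ}

lemma integral_Iio_eq_add_intervalIntegral (hf : Integrable f) (a x : ℝ) :
    ∫ y in Iio x, f y = (∫ y in Iio a, f y) + ∫ y in a..x, f y := by
  rw [← integral_Iic_eq_integral_Iio, ← integral_Iic_eq_integral_Iio,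
    ← intervalIntegral.integral_Iic_sub_Iic hf.integrableOn hf.integrableOn, add_sub_cancel]

lemma hasDerivAt_integral_Iio (hf : Integrable f) (hfc : Continuous f) (x : ℝ) :
    HasDerivAt (fun x ↦ ∫ y in Iio x, f y) (f x) x := by
  have hF : (fun x ↦ ∫ y in Iio x, f y) = fun x ↦ (∫ y in Iio 0, f y) + ∫ y in 0..x, f y :=
    funext (integral_Iio_eq_add_intervalIntegral hf 0)
  rw [hF]
  exact (intervalIntegral.integral_hasDerivAt_right hf.intervalIntegrable
    (hfc.stronglyMeasurableAtFilter _ _) hfc.continuousAt).const_add _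

lemma tendsto_integral_Iio_atBot (hf : Integrable f) :
    Tendsto (fun x ↦ ∫ y in Iio x, f y) atBot (𝓝 0) := by
  have h := (intervalIntegral_tendsto_integral_Iic 0 hf.integrableOn tendsto_id).const_sub
    (∫ y in Iio 0, f y)
  rw [integral_Iic_eq_integral_Iio, sub_self] at h
  simp only [id_eq] at h
  refine h.congr fun x ↦ ?_
  rw [integral_Iio_eq_add_intervalIntegral hf 0 x, intervalIntegral.integral_symm]
  ring

theorem integral_Iio_mul_div_one_sub_mul (hf : Integrable f) (hfc : Continuous f) {c m : ℝ}
    (hm : 0 < m) (hF : ∀ x, m ≤ 1 - c * ∫ y in Iio x, f y) (x : ℝ) :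
    ∫ y in Iio x, c * f y / (1 - c * ∫ z in Iio y, f z) =
      -Real.log (1 - c * ∫ y in Iio x, f y) := by
  set D : ℝ → ℝ := fun x ↦ 1 - c * ∫ y in Iio x, f y
  have hD_pos : ∀ x, 0 < D x := fun x ↦ hm.trans_le (hF x)
  have hD : ∀ x, HasDerivAt D (-(c * f x)) x := fun x ↦ by
    simpa using ((hasDerivAt_integral_Iio hf hfc x).const_mul c).const_sub 1
  have hD_cont : Continuous D := continuous_iff_continuousAt.2 fun x ↦ (hD x).continuousAt
  have hlog : ∀ x, HasDerivAt (fun x ↦ -Real.log (D x)) (c * f x / D x) x := fun x ↦ by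
    simpa [neg_div] using ((hD x).log (hD_pos x).ne').fun_neg
  have hint : Integrable fun x ↦ c * f x / D x := by
    simp_rw [mul_div_right_comm c]
    refine hf.bdd_mul (c := |c| / m)
      (continuous_const.div hD_cont fun x ↦ (hD_pos x).ne').aestronglyMeasurable
      (Eventually.of_forall fun x ↦ ?_)
    rw [norm_div, Real.norm_eq_abs, Real.norm_of_nonneg (hD_pos x).le]
    exact div_le_div_of_nonneg_left (abs_nonneg c) hm (hF x)
  have hlim : Tendsto (fun x ↦ -Real.log (D x)) atBot (𝓝 0) := by
    have h := ((tendsto_integral_Iio_atBot hf).const_mul c).const_sub 1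
    simpa using ((Real.continuousAt_log one_ne_zero).tendsto.comp (by simpa using h)).neg
  rw [← integral_Iic_eq_integral_Iio, integral_Iic_of_hasDerivAt_of_tendsto'
    (fun x _ ↦ hlog x) hint.integrableOn hlim, sub_zero]

end PrimitiveFromMinusInfinity

section Gaussian

variable {μ : ℝ}

lemma phi0_eq_gaussianPDFReal (hμ : 0 < μ) : phi0 μ = gaussianPDFReal 0 (2 * μ).toNNReal := by
  ext ξ
  rw [phi0, gaussianPDFReal, Real.coe_toNNReal _ (by positivity), sub_zero]
  ring_nf

lemma continuous_phi0 (μ : ℝ) : Continuous (phi0 μ) := by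
  unfold phi0
  fun_prop

lemma integrable_phi0 (hμ : 0 < μ) : Integrable (phi0 μ) := by
  rw [phi0_eq_gaussianPDFReal hμ]
  exact integrable_gaussianPDFReal _ _

lemma min_one_one_sub_le_one_sub_mul_integral_Iio_phi0 (hμ : 0 < μ) (c ξ : ℝ) :
    min 1 (1 - c) ≤ 1 - c * ∫ y in Iio ξ, phi0 μ y := by
  rw [phi0_eq_gaussianPDFReal hμ]
  refine min_one_one_sub_le_one_sub_mul
    (setIntegral_nonneg measurableSet_Iio fun y _ ↦ gaussianPDFReal_nonneg _ _ _) ?_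
  calc ∫ y in Iio ξ, gaussianPDFReal 0 (2 * μ).toNNReal y
      ≤ ∫ y, gaussianPDFReal 0 (2 * μ).toNNReal y :=
        setIntegral_le_integral (integrable_gaussianPDFReal _ _)
          (Eventually.of_forall (gaussianPDFReal_nonneg _ _))
    _ = 1 := integral_gaussianPDFReal_eq_one _ (by simpa using hμ)

lemma sqrt_div_pi_eq (hμ : 0 < μ) :
    Real.sqrt (μ / Real.pi) = 2 * μ * (Real.sqrt (4 * Real.pi * μ))⁻¹ := by
  rw [← Real.sqrt_sq (by positivity : 0 ≤ 2 * μ), ← Real.sqrt_inv,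
    ← Real.sqrt_mul (sq_nonneg _)]
  congr 1
  field_simp
  ring

lemma AM_eq (hμ : 0 < μ) (M ξ : ℝ) :
    AM μ M ξ = 2 * μ * ((1 - Real.exp (-M / (2 * μ))) * phi0 μ ξ /
      (1 - (1 - Real.exp (-M / (2 * μ))) * ∫ y in Iio ξ, phi0 μ y)) := by
  have hs : Real.sqrt (4 * Real.pi * μ) ≠ 0 := by positivity
  simp_rw [phi0, integral_const_mul, AM, sqrt_div_pi_eq hμ]
  field_simp

end Gaussian

/-- for all `ξ`,
`exp(−(1/(2μ)) ∫_{−∞}^ξ A_M) = 1 − (1 − e^{−M/(2μ)}) ∫_{−∞}^ξ φ₀`, and this quantity is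
bounded below by `min{1, e^{−M/(2μ)}} > 0`. -/
theorem stmt17 (μ M : ℝ) (hμ : 0 < μ) :
    (∀ ξ : ℝ,
      Real.exp (-(1 / (2 * μ)) * ∫ y in Set.Iio ξ, AM μ M y) =
        1 - (1 - Real.exp (-M / (2 * μ))) * ∫ y in Set.Iio ξ, phi0 μ y) ∧
    (∀ ξ : ℝ,
      min 1 (Real.exp (-M / (2 * μ))) ≤
        1 - (1 - Real.exp (-M / (2 * μ))) * ∫ y in Set.Iio ξ, phi0 μ y) ∧
    0 < min 1 (Real.exp (-M / (2 * μ))) := by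
  have hmin_pos : 0 < min 1 (Real.exp (-M / (2 * μ))) := lt_min one_pos (Real.exp_pos _)
  have hlow (ξ : ℝ) : min 1 (Real.exp (-M / (2 * μ))) ≤
      1 - (1 - Real.exp (-M / (2 * μ))) * ∫ y in Iio ξ, phi0 μ y := by
    simpa using min_one_one_sub_le_one_sub_mul_integral_Iio_phi0 hμ (1 - Real.exp (-M / (2 * μ))) ξ
  refine ⟨fun ξ ↦ ?_, hlow, hmin_pos⟩
  simp_rw [AM_eq hμ, integral_const_mul]
  rw [integral_Iio_mul_div_one_sub_mul (integrable_phi0 hμ) (continuous_phi0 μ) hmin_pos hlow,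
    mul_neg, neg_mul_neg, ← mul_assoc, one_div_mul_cancel (by positivity), one_mul,
    Real.exp_log (hmin_pos.trans_le (hlow ξ))]
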